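/- Let n ≥ 2, N = 2n, h = 1/n, d ≥ 1, c ∈ ℝ, and let (B_h^D, B_h^P) be an LFA-compatible pair of matrices. Consider the stationary iterations u^{k+1} = u^k + B_h^D (f − A_h^D u^k) and ũ^{k+1} = ũ^k + B_h^P (f̃ − A_h^P ũ^k). If f̃ = E_{o,h}^{⊗d} f and ũ^0 = E_{o,h}^{⊗d} u^0, then ũ^k = E_{o,h}^{⊗d} u^k for all k = 1, 2, …. -/

import Mathlib

/-! The odd extension `E = E_{o,h}` intertwines the one-dimensional operators,
`T_h^P E = E T_h^D`: extending oddly across both boundary points turns the Dirichlet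
problem into a periodic one. Kronecker products multiply factorwise, so this lifts to
`A_h^P E^{⊗d} = E^{⊗d} A_h^D`. Since `R E = I`, the extension `E^{⊗d}` is injective, and
LFA-compatibility gives `B_h^P E^{⊗d} = E^{⊗d} B_h^D`: writing `B^P E w = E z`, one gets
`B^D w = R B^P E w = z`. With both intertwinings, one periodic iteration step maps
`E^{⊗d} u^k` to `E^{⊗d} u^{k+1}`. -/

open Matrix Finset

noncomputable section

/-- The tridiagonal matrix `tridiag(-1, 2, -1)` of size `m × m` (0-based indexing). -/
def tridiag (m : ℕ) : Matrix (Fin m) (Fin m) ℝ :=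
  Matrix.of fun i j =>
    if (i : ℕ) = (j : ℕ) then 2
    else if (i : ℕ) + 1 = (j : ℕ) ∨ (j : ℕ) + 1 = (i : ℕ) then -1 else 0

/-- The odd extension operator `E_{o,h} : ℝ^{n-1} → ℝ^{2n}`, sending the basis vector
`e_i^{n-1}` (math index `i = 1,…,n-1`) to `e_i^{2n} - e_{2n-i}^{2n}`.
In 0-based indexing, column `i` has entry `1` in row `i` and `-1` in row `2n - i - 2`. -/
def oddExt (n : ℕ) : Matrix (Fin (2 * n)) (Fin (n - 1)) ℝ :=
  Matrix.of fun k i =>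
    if (k : ℕ) = (i : ℕ) then 1
    else if (k : ℕ) + (i : ℕ) + 2 = 2 * n then -1 else 0

/-- The restriction operator `R_{o,h} = (1/2) E_{o,h}ᵀ`. -/
def oddRestr (n : ℕ) : Matrix (Fin (n - 1)) (Fin (2 * n)) ℝ :=
  (2 : ℝ)⁻¹ • (oddExt n)ᵀ

/-- The Dirichlet matrix `T_h^D = (1/h²) · tridiag(-1, 2, -1)`, with `h = 1/n`
(so `1/h² = n²`). -/
def ThD (n : ℕ) : Matrix (Fin (n - 1)) (Fin (n - 1)) ℝ :=
  ((n : ℝ) ^ 2) • tridiag (n - 1)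

/-- The periodic matrix `T_h^P = (1/h²) · (tridiag(-1,2,-1) - e₁ e_Nᵀ - e_N e₁ᵀ)`,
with `h = 1/n`, `N = 2n` (0-based: corners at `(0, 2n-1)` and `(2n-1, 0)`). -/
def ThP (n : ℕ) : Matrix (Fin (2 * n)) (Fin (2 * n)) ℝ :=
  ((n : ℝ) ^ 2) •
    (tridiag (2 * n)
      - Matrix.of (fun (i j : Fin (2 * n)) => if (i : ℕ) = 0 ∧ (j : ℕ) = 2 * n - 1 then 1 else 0)
      - Matrix.of (fun (i j : Fin (2 * n)) => if (i : ℕ) = 2 * n - 1 ∧ (j : ℕ) = 0 then 1 else 0))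

/-- The `d`-fold Kronecker power `X^{⊗d}`, where `ℝ^{a^d}` is identified with the
space of functions `(Fin d → Fin a) → ℝ`. -/
def kronPow {a b : ℕ} (d : ℕ) (X : Matrix (Fin a) (Fin b) ℝ) :
    Matrix (Fin d → Fin a) (Fin d → Fin b) ℝ :=
  Matrix.of fun i j => ∏ t, X (i t) (j t)

/-- `Σ_{t=1}^d I^{⊗(t-1)} ⊗ T ⊗ I^{⊗(d-t)}` in the function-indexed representation. -/
def kronSumId {m : ℕ} (d : ℕ) (T : Matrix (Fin m) (Fin m) ℝ) :
    Matrix (Fin d → Fin m) (Fin d → Fin m) ℝ :=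
  ∑ t : Fin d, Matrix.of fun i j =>
    T (i t) (j t) * ∏ s ∈ Finset.univ.erase t, (if i s = j s then (1 : ℝ) else 0)

/-- The `d`-dimensional discrete Dirichlet reaction-diffusion matrix
`A_h^D = Σ_j I^{⊗(j-1)} ⊗ T_h^D ⊗ I^{⊗(d-j)} + c I^{⊗d}`. -/
def AD (n d : ℕ) (c : ℝ) : Matrix (Fin d → Fin (n - 1)) (Fin d → Fin (n - 1)) ℝ :=
  kronSumId d (ThD n) + c • 1

/-- The `d`-dimensional discrete periodic reaction-diffusion matrix
`A_h^P = Σ_j I^{⊗(j-1)} ⊗ T_h^P ⊗ I^{⊗(d-j)} + c I^{⊗d}`. -/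
def AP (n d : ℕ) (c : ℝ) : Matrix (Fin d → Fin (2 * n)) (Fin d → Fin (2 * n)) ℝ :=
  kronSumId d (ThP n) + c • 1

/-- A pair `(M^D, M^P)` is LFA-compatible with respect to an extension `E` and a
restriction `R` if `M^D = R M^P E` and `M^P` maps `range E` into itself. -/
def LFACompatible {α β : Type*} [Fintype α] [Fintype β]
    (E : Matrix α β ℝ) (R : Matrix β α ℝ)
    (MD : Matrix β β ℝ) (MP : Matrix α α ℝ) : Prop :=
  MD = R * MP * E ∧ ∀ v ∈ Set.range E.mulVec, MP *ᵥ v ∈ Set.range E.mulVec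

namespace Matrix

variable {ι R α β γ : Type*} [Fintype ι] [CommSemiring R]

def kronProd (X : ι → Matrix α β R) : Matrix (ι → α) (ι → β) R :=
  of fun i j => ∏ t, X t (i t) (j t)

theorem kronProd_mul [DecidableEq ι] [Fintype β] (X : ι → Matrix α β R) (Y : ι → Matrix β γ R) :
    kronProd X * kronProd Y = kronProd fun t => X t * Y t := by
  ext i j
  simp only [mul_apply, kronProd, of_apply, ← Finset.prod_mul_distrib]
  exact (Fintype.prod_sum fun t x => X t (i t) x * Y t x (j t)).symm

theorem kronProd_one [DecidableEq α] : kronProd (1 : ι → Matrix α α R) = 1 := by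
  ext i j
  simp [kronProd, one_apply, Finset.prod_boole, funext_iff]

end Matrix

theorem kronPow_eq_kronProd {a b : ℕ} (d : ℕ) (X : Matrix (Fin a) (Fin b) ℝ) :
    kronPow d X = kronProd fun _ => X := rfl

theorem kronSumId_eq_sum_kronProd {m : ℕ} (d : ℕ) (T : Matrix (Fin m) (Fin m) ℝ) :
    kronSumId d T = ∑ t, kronProd (Function.update 1 t T) := by
  refine Finset.sum_congr rfl fun t _ => ?_
  ext i j
  rw [kronProd, of_apply, of_apply, ← Finset.mul_prod_erase _ _ (Finset.mem_univ t),
    Function.update_self]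
  congr 1
  refine Finset.prod_congr rfl fun s hs => ?_
  rw [Function.update_of_ne (Finset.ne_of_mem_erase hs), Pi.one_apply, one_apply]

theorem kronSumId_mul_kronPow {a b : ℕ} (d : ℕ) {T : Matrix (Fin a) (Fin a) ℝ}
    {T' : Matrix (Fin b) (Fin b) ℝ} {E : Matrix (Fin a) (Fin b) ℝ} (h : T * E = E * T') :
    kronSumId d T * kronPow d E = kronPow d E * kronSumId d T' := by
  rw [kronSumId_eq_sum_kronProd, kronSumId_eq_sum_kronProd, kronPow_eq_kronProd,
    Matrix.sum_mul, Matrix.mul_sum]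
  refine Finset.sum_congr rfl fun t _ => ?_
  rw [kronProd_mul, kronProd_mul]
  congr 1
  ext1 s
  rcases eq_or_ne s t with rfl | hs
  · simp [h]
  · simp [Function.update_of_ne hs]

theorem kronPow_mul {a b c : ℕ} (d : ℕ) (X : Matrix (Fin a) (Fin b) ℝ)
    (Y : Matrix (Fin b) (Fin c) ℝ) : kronPow d X * kronPow d Y = kronPow d (X * Y) :=
  kronProd_mul _ _

theorem kronPow_one {a : ℕ} (d : ℕ) : kronPow d (1 : Matrix (Fin a) (Fin a) ℝ) = 1 :=
  kronProd_one

theorem Fin.sum_ite_val_eq {M : Type*} [AddCommMonoid M] {m : ℕ} (c : ℕ) (f : Fin m → M) :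
    (∑ j : Fin m, if (j : ℕ) = c then f j else 0) = if h : c < m then f ⟨c, h⟩ else 0 := by
  split_ifs with h
  · simpa [Fin.ext_iff] using Finset.sum_ite_eq' Finset.univ (⟨c, h⟩ : Fin m) f
  · exact Finset.sum_eq_zero fun j _ => if_neg (by omega)

theorem Fin.sum_ite_val_add_eq {M : Type*} [AddCommMonoid M] {m : ℕ} (a b : ℕ)
    (f : Fin m → M) :
    (∑ j : Fin m, if (j : ℕ) + a = b then f j else 0) =
      if h : a ≤ b ∧ b - a < m then f ⟨b - a, h.2⟩ else 0 := by
  by_cases hab : a ≤ b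
  · have hiff : ∀ j : Fin m, (j : ℕ) + a = b ↔ (j : ℕ) = b - a := fun j => by omega
    simp only [hiff, Fin.sum_ite_val_eq, hab, true_and]
  · rw [dif_neg (by omega)]
    exact Finset.sum_eq_zero fun j _ => if_neg (by omega)

theorem oddExt_apply_eq_sub (n : ℕ) (k : Fin (2 * n)) (i : Fin (n - 1)) :
    oddExt n k i =
      (if (k : ℕ) = i then 1 else 0) - if (k : ℕ) + (i + 2) = 2 * n then 1 else 0 := by
  have := i.isLt
  simp only [oddExt, of_apply]
  split_ifs <;> first | omega | norm_num

theorem oddExt_apply_eq_sub' (n : ℕ) (k : Fin (2 * n)) (i : Fin (n - 1)) :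
    oddExt n k i =
      (if (i : ℕ) = k then 1 else 0) - if (i : ℕ) + (k + 2) = 2 * n then 1 else 0 := by
  have := i.isLt
  simp only [oddExt, of_apply]
  split_ifs <;> first | omega | norm_num

theorem mul_oddExt_apply {α : Type*} {n : ℕ} (M : Matrix α (Fin (2 * n)) ℝ) (k : α)
    (i : Fin (n - 1)) :
    (M * oddExt n) k i = M k ⟨i, by omega⟩ - M k ⟨2 * n - (i + 2), by omega⟩ := by
  simp only [mul_apply, oddExt_apply_eq_sub, mul_sub, mul_ite, mul_one, mul_zero,
    Finset.sum_sub_distrib, Fin.sum_ite_val_eq, Fin.sum_ite_val_add_eq]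
  rw [dif_pos (by omega), dif_pos (by omega)]

theorem oddExt_mul_apply {β : Type*} {n : ℕ} (M : Matrix (Fin (n - 1)) β ℝ) (k : Fin (2 * n))
    (i : β) :
    (oddExt n * M) k i =
      (if h : (k : ℕ) < n - 1 then M ⟨k, h⟩ i else 0) -
        if h : k + 2 ≤ 2 * n ∧ 2 * n - (k + 2) < n - 1 then M ⟨2 * n - (k + 2), h.2⟩ i
        else 0 := by
  simp only [mul_apply, oddExt_apply_eq_sub', sub_mul, ite_mul, one_mul, zero_mul,
    Finset.sum_sub_distrib, Fin.sum_ite_val_eq, Fin.sum_ite_val_add_eq]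

theorem ThP_mul_oddExt (n : ℕ) : ThP n * oddExt n = oddExt n * ThD n := by
  rw [ThP, ThD, Matrix.smul_mul, Matrix.mul_smul]
  congr 1
  ext k i
  have := k.isLt
  have := i.isLt
  rw [mul_oddExt_apply, oddExt_mul_apply]
  simp only [tridiag, Matrix.sub_apply, of_apply,
    show (i : ℕ) ≠ 2 * n - 1 by omega, show 2 * n - (i + 2) ≠ 2 * n - 1 by omega,
    show 2 * n - (i + 2) ≠ 0 by omega, and_false, if_false, sub_zero]
  by_cases hk : (k : ℕ) < n - 1
  · rw [dif_pos hk, dif_neg (by omega)]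
    split_ifs <;> first | omega | norm_num
  · rw [dif_neg hk]
    split_ifs <;> first | omega | norm_num

theorem oddRestr_mul_oddExt (n : ℕ) : oddRestr n * oddExt n = 1 := by
  ext i j
  have := i.isLt
  have := j.isLt
  rw [mul_oddExt_apply]
  simp only [oddRestr, Matrix.smul_apply, transpose_apply, oddExt, of_apply, one_apply,
    Fin.ext_iff, smul_eq_mul]
  split_ifs <;> first | omega | norm_num

theorem AP_mul_kronPow_oddExt (n d : ℕ) (c : ℝ) :
    AP n d c * kronPow d (oddExt n) = kronPow d (oddExt n) * AD n d c := by
  rw [AP, AD, Matrix.add_mul, Matrix.mul_add, kronSumId_mul_kronPow d (ThP_mul_oddExt n),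
    Matrix.smul_mul, Matrix.mul_smul, Matrix.one_mul, Matrix.mul_one]

theorem kronPow_oddRestr_mul_kronPow_oddExt (n d : ℕ) :
    kronPow d (oddRestr n) * kronPow d (oddExt n) = 1 := by
  rw [kronPow_mul, oddRestr_mul_oddExt, kronPow_one]

section LFACompatible

variable {α β : Type*} [Fintype α] [Fintype β] [DecidableEq β] {E : Matrix α β ℝ} {R : Matrix β α ℝ}
  {BD AD : Matrix β β ℝ} {BP AP : Matrix α α ℝ}

theorem LFACompatible.mulVec_mulVec_comm (hB : LFACompatible E R BD BP) (hRE : R * E = 1)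
    (w : β → ℝ) : BP *ᵥ (E *ᵥ w) = E *ᵥ (BD *ᵥ w) := by
  obtain ⟨hBD, hrange⟩ := hB
  obtain ⟨z, hz⟩ := hrange _ ⟨w, rfl⟩
  have hBDw : BD *ᵥ w = z := by
    rw [hBD, ← mulVec_mulVec, ← mulVec_mulVec, ← hz, mulVec_mulVec, hRE, one_mulVec]
  rw [hBDw, hz]

theorem LFACompatible.iterate_eq_mulVec (hB : LFACompatible E R BD BP) (hRE : R * E = 1)
    (hA : AP * E = E * AD) {f : β → ℝ} {u : ℕ → β → ℝ} {ut : ℕ → α → ℝ}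
    (hu : ∀ k, u (k + 1) = u k + BD *ᵥ (f - AD *ᵥ u k))
    (hut : ∀ k, ut (k + 1) = ut k + BP *ᵥ (E *ᵥ f - AP *ᵥ ut k))
    (h0 : ut 0 = E *ᵥ u 0) (k : ℕ) : ut k = E *ᵥ u k := by
  induction k with
  | zero => exact h0
  | succ k ih =>
    rw [hut, hu, ih, mulVec_mulVec, hA, ← mulVec_mulVec, ← mulVec_sub,
      hB.mulVec_mulVec_comm hRE, mulVec_add]

end LFACompatible

theorem iterates_related_general (n d : ℕ) (c : ℝ)
    (BD : Matrix (Fin d → Fin (n - 1)) (Fin d → Fin (n - 1)) ℝ)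
    (BP : Matrix (Fin d → Fin (2 * n)) (Fin d → Fin (2 * n)) ℝ)
    (hB : LFACompatible (kronPow d (oddExt n)) (kronPow d (oddRestr n)) BD BP)
    (f : (Fin d → Fin (n - 1)) → ℝ) (ft : (Fin d → Fin (2 * n)) → ℝ)
    (u : ℕ → (Fin d → Fin (n - 1)) → ℝ) (ut : ℕ → (Fin d → Fin (2 * n)) → ℝ)
    (hu : ∀ k, u (k + 1) = u k + BD *ᵥ (f - AD n d c *ᵥ u k))
    (hut : ∀ k, ut (k + 1) = ut k + BP *ᵥ (ft - AP n d c *ᵥ ut k))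
    (hf : ft = kronPow d (oddExt n) *ᵥ f)
    (h0 : ut 0 = kronPow d (oddExt n) *ᵥ u 0) :
    ∀ k, 1 ≤ k → ut k = kronPow d (oddExt n) *ᵥ u k := by
  subst hf
  exact fun k _ => hB.iterate_eq_mulVec (kronPow_oddRestr_mul_kronPow_oddExt n d)
    (AP_mul_kronPow_oddExt n d c) hu hut h0 k

/-- if `(B_h^D, B_h^P)` is LFA-compatible, `f̃ = E_{o,h}^{⊗d} f` and
`ũ⁰ = E_{o,h}^{⊗d} u⁰`, then the stationary iterations satisfy
`ũᵏ = E_{o,h}^{⊗d} uᵏ` for all `k = 1, 2, …`. -/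
theorem iterates_related (n d : ℕ) (hn : 2 ≤ n) (hd : 1 ≤ d) (c : ℝ)
    (BD : Matrix (Fin d → Fin (n - 1)) (Fin d → Fin (n - 1)) ℝ)
    (BP : Matrix (Fin d → Fin (2 * n)) (Fin d → Fin (2 * n)) ℝ)
    (hB : LFACompatible (kronPow d (oddExt n)) (kronPow d (oddRestr n)) BD BP)
    (f : (Fin d → Fin (n - 1)) → ℝ) (ft : (Fin d → Fin (2 * n)) → ℝ)
    (u : ℕ → (Fin d → Fin (n - 1)) → ℝ) (ut : ℕ → (Fin d → Fin (2 * n)) → ℝ)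
    (hu : ∀ k, u (k + 1) = u k + BD *ᵥ (f - AD n d c *ᵥ u k))
    (hut : ∀ k, ut (k + 1) = ut k + BP *ᵥ (ft - AP n d c *ᵥ ut k))
    (hf : ft = kronPow d (oddExt n) *ᵥ f)
    (h0 : ut 0 = kronPow d (oddExt n) *ᵥ u 0) :
    ∀ k, 1 ≤ k → ut k = kronPow d (oddExt n) *ᵥ u k :=
  iterates_related_general n d c BD BP hB f ft u ut hu hut hf h0
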